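/- Let G be a finitely generated Abelian group, let S ⊆ G be a symmetric finite generating set, and let s ∈ S. If some quasi-algebraic line in Cay(G,S) of quasi-type π_G(s) is a geodesic line, then every quasi-algebraic line in Cay(G,S) of quasi-type π_G(s) is a geodesic line. -/

import Mathlib

/-- The Cayley graph of an (additive) group `G` with respect to a subset `S`:
vertices are elements of `G`, and `g`, `h` are adjacent iff `h - g ∈ (S ∪ -S) \ {0}`. -/
def cayley {G : Type*} [AddCommGroup G] (S : Set G) : SimpleGraph G where
  Adj g h := g ≠ h ∧ (h - g ∈ S ∨ g - h ∈ S)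
  symm := ⟨fun _ _ hadj => ⟨hadj.1.symm, hadj.2.symm⟩⟩
  loopless := ⟨fun _ hadj => hadj.1 rfl⟩

/-- `p 0, p 1, …, p n` is a geodesic segment in `Γ`: a path whose length realizes
the distance between its endpoints. -/
def IsGeodesicSegment {V : Type*} (Γ : SimpleGraph V) (n : ℕ) (p : ℕ → V) : Prop :=
  (∀ i < n, Γ.Adj (p i) (p (i + 1))) ∧ Γ.dist (p 0) (p n) = n

/-- A geodesic line in `Γ`. -/
def IsGeodesicLine {V : Type*} (Γ : SimpleGraph V) (γ : ℤ → V) : Prop :=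
  ∀ j k : ℤ, Γ.dist (γ j) (γ k) = (j - k).natAbs

/-- A convex geodesic line: a geodesic line such that for all `n ≤ m` the only geodesic
segment from `γ n` to `γ m` is `(γ n, γ (n+1), …, γ m)`. -/
def IsConvexGeodesicLine {V : Type*} (Γ : SimpleGraph V) (γ : ℤ → V) : Prop :=
  IsGeodesicLine Γ γ ∧
    ∀ n m : ℤ, n ≤ m → ∀ (k : ℕ) (p : ℕ → V),
      IsGeodesicSegment Γ k p → p 0 = γ n → p k = γ m →
        ∀ j ≤ k, p j = γ (n + j)

/-- A quasi-convex geodesic line: a geodesic line such that geodesic segments joining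
points `c`-close to the line stay uniformly `C`-close to it (fellow-traveller style). -/
def IsQuasiConvexGeodesicLine {V : Type*} (Γ : SimpleGraph V) (γ : ℤ → V) : Prop :=
  IsGeodesicLine Γ γ ∧
    ∀ c : ℕ, ∃ C : ℕ, ∀ n m : ℤ, n ≤ m → ∀ x y : V,
      Γ.dist x (γ n) ≤ c → Γ.dist y (γ m) ≤ c →
        ∀ p : ℕ → V, IsGeodesicSegment Γ (Γ.dist x y) p →
          p 0 = x → p (Γ.dist x y) = y →
            ∀ j ≤ Γ.dist x y, Γ.dist (p j) (γ (n + j)) ≤ C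

/-- A quasi-algebraic line of quasi-type `t ∈ G/tors G` in `Cay(G,S)`: a ℤ-path in the
Cayley graph all of whose steps project to `t` in `G/tors G`. -/
def IsQuasiAlgebraicLine {G : Type*} [AddCommGroup G] (S : Set G)
    (t : G ⧸ AddCommGroup.torsion G) (γ : ℤ → G) : Prop :=
  (∀ n : ℤ, (cayley S).Adj (γ n) (γ (n + 1))) ∧
    ∀ n : ℤ, QuotientAddGroup.mk' (AddCommGroup.torsion G) (γ (n + 1) - γ n) = t

/-! Let `γ` be a geodesic quasi-algebraic line of quasi-type `t`. If `g` projects to `n • t`,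
then `γ (r * n) - γ 0` and `r • g` differ by a torsion element, so
`r * n ≤ r * |g| + D` for every `r`, where `D` bounds the word lengths of the finitely many
torsion elements; hence `|g| ≥ n`. Applied to `g = η (k + n) - η k` for another line `η` of
the same quasi-type, this lower bound matches the upper bound `n` given by the path `η` itself. -/

theorem AddCommGroup.finite_torsion {G : Type*} [AddCommGroup G] [AddGroup.FG G] :
    Finite (torsion G) := by
  have : Module.Finite ℤ G := Module.Finite.iff_addGroup_fg.mpr ‹_›
  have : AddGroup.FG (torsion G) := Module.Finite.iff_addGroup_fg.mp
    (inferInstance : Module.Finite ℤ (AddSubgroup.toIntSubmodule (torsion G)))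
  exact finite_of_fg_isAddTorsion _ fun g => AddSubmonoid.isOfFinAddOrder_coe.mp g.2

theorem eq_add_zsmul_of_forall_sub_eq {A : Type*} [AddCommGroup A] {u : ℤ → A} {t : A}
    (hu : ∀ n, u (n + 1) - u n = t) (n : ℤ) : u n = u 0 + n • t := by
  induction n using Int.induction_on with
  | zero => simp
  | succ n ih => rw [add_zsmul, one_zsmul, ← add_assoc, ← ih, ← hu n]; abel
  | pred n ih =>
    have h : u (-n - 1) = u (-n) - t := by rw [← hu (-n - 1), sub_add_cancel]; abel
    rw [h, ih, sub_zsmul, one_zsmul]; abel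

theorem Nat.le_of_forall_mul_le_mul_add {n d D : ℕ} (h : ∀ r : ℕ, r * n ≤ r * d + D) :
    n ≤ d := by
  by_contra! hlt
  nlinarith [h (D + 1)]

namespace SimpleGraph

variable {V W : Type*} {G : SimpleGraph V} {G' : SimpleGraph W}

theorem Hom.edist_map_le (f : G →g G') (u v : V) : G'.edist (f u) (f v) ≤ G.edist u v :=
  le_iInf fun p => (edist_le (p.map f)).trans_eq (by simp)

theorem Iso.dist_map (f : G ≃g G') (u v : V) : G'.dist (f u) (f v) = G.dist u v := by
  have h : G'.edist (f u) (f v) = G.edist u v :=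
    le_antisymm (Hom.edist_map_le f.toHom u v)
      (by simpa using Hom.edist_map_le f.symm.toHom (f u) (f v))
  simp only [dist, h]

theorem dist_le_of_forall_adj_succ {γ : ℤ → V} (hγ : ∀ n, G.Adj (γ n) (γ (n + 1)))
    (j : ℤ) (m : ℕ) : G.dist (γ j) (γ (j + m)) ≤ m := by
  induction m with
  | zero => simp
  | succ m ih =>
    have hadj : G.Adj (γ (j + m)) (γ (j + (m + 1 : ℕ))) := by
      convert hγ (j + m) using 2; push_cast; ring
    calc G.dist (γ j) (γ (j + (m + 1 : ℕ)))
        ≤ G.dist (γ j) (γ (j + m)) + G.dist (γ (j + m)) (γ (j + (m + 1 : ℕ))) :=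
          hadj.reachable.dist_triangle_right _
      _ ≤ m + 1 := by rw [dist_eq_one_iff_adj.mpr hadj]; omega

end SimpleGraph

section Cayley

open SimpleGraph

variable {G : Type*} [AddCommGroup G] {S : Set G}

theorem cayley_adj_add_right (c : G) {a b : G} :
    (cayley S).Adj (a + c) (b + c) ↔ (cayley S).Adj a b := by
  simp [cayley]

def cayleyAddRight (S : Set G) (c : G) : cayley S ≃g cayley S :=
  ⟨Equiv.addRight c, cayley_adj_add_right c⟩

@[simp]
theorem cayleyAddRight_apply (c x : G) : cayleyAddRight S c x = x + c := rfl

theorem cayley_dist_add_right (a b c : G) :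
    (cayley S).dist (a + c) (b + c) = (cayley S).dist a b :=
  (cayleyAddRight S c).dist_map a b

theorem cayley_dist_eq_dist_zero_sub (a b : G) :
    (cayley S).dist a b = (cayley S).dist 0 (b - a) := by
  simpa using cayley_dist_add_right (S := S) 0 (b - a) a

theorem cayley_connected (hgen : AddSubgroup.closure S = ⊤) : (cayley S).Connected := by
  suffices h : ∀ g, (cayley S).Reachable 0 g from
    (connected_iff _).mpr ⟨fun a b => (h a).symm.trans (h b), ⟨0⟩⟩
  intro g
  induction (hgen ▸ AddSubgroup.mem_top g : g ∈ AddSubgroup.closure S)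
    using AddSubgroup.closure_induction with
  | mem x hx =>
    rcases eq_or_ne x 0 with rfl | hx0
    · rfl
    · exact Adj.reachable ⟨hx0.symm, Or.inl (by simpa using hx)⟩
  | zero => rfl
  | add x y _ _ hx hy =>
    have hxy : (cayley S).Reachable x (x + y) := by
      simpa [add_comm] using hy.map (cayleyAddRight S x).toHom
    exact hx.trans hxy
  | neg x _ hx => simpa using (hx.map (cayleyAddRight S (-x)).toHom).symm

theorem cayley_dist_zero_add_le (hgen : AddSubgroup.closure S = ⊤) (a b : G) :
    (cayley S).dist 0 (a + b) ≤ (cayley S).dist 0 a + (cayley S).dist 0 b := by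
  have h := (cayley_connected hgen).dist_triangle (u := 0) (v := a) (w := a + b)
  rwa [cayley_dist_eq_dist_zero_sub a, add_sub_cancel_left] at h

theorem cayley_dist_zero_nsmul_le (hgen : AddSubgroup.closure S = ⊤) (g : G) (r : ℕ) :
    (cayley S).dist 0 (r • g) ≤ r * (cayley S).dist 0 g := by
  induction r with
  | zero => simp
  | succ r ih =>
    calc (cayley S).dist 0 ((r + 1) • g) ≤ (cayley S).dist 0 (r • g) + (cayley S).dist 0 g := by
          rw [succ_nsmul]; exact cayley_dist_zero_add_le hgen _ _
      _ ≤ (r + 1) * (cayley S).dist 0 g := by rw [add_one_mul]; omega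

end Cayley

section QuasiAlgebraic

open AddCommGroup

variable {G : Type*} [AddCommGroup G] {S : Set G} {t : G ⧸ torsion G} {γ : ℤ → G}

theorem IsQuasiAlgebraicLine.mk_sub (hγ : IsQuasiAlgebraicLine S t γ) (j k : ℤ) :
    QuotientAddGroup.mk' (torsion G) (γ k - γ j) = (k - j) • t := by
  have hu := eq_add_zsmul_of_forall_sub_eq (u := fun n => QuotientAddGroup.mk' (torsion G) (γ n))
    fun n => by simpa only [map_sub] using hγ.2 n
  rw [map_sub, hu k, hu j, sub_zsmul]; abel

theorem IsGeodesicLine.le_cayley_dist_zero [AddGroup.FG G] (hgen : AddSubgroup.closure S = ⊤)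
    (hγ : IsQuasiAlgebraicLine S t γ) (hγgeo : IsGeodesicLine (cayley S) γ) {g : G} {n : ℕ}
    (hg : QuotientAddGroup.mk' (torsion G) g = (n : ℤ) • t) : n ≤ (cayley S).dist 0 g := by
  have := finite_torsion (G := G)
  obtain ⟨D, hD⟩ := ((Set.toFinite (torsion G : Set G)).image ((cayley S).dist 0)).bddAbove
  refine Nat.le_of_forall_mul_le_mul_add (D := D) fun r => ?_
  set x := γ ((r * n : ℕ) : ℤ) - γ 0
  have hx : x - r • g ∈ torsion G := by
    refine (QuotientAddGroup.eq_zero_iff _).mp ?_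
    rw [← QuotientAddGroup.mk'_apply, map_sub, hγ.mk_sub, map_nsmul, hg, ← natCast_zsmul,
      smul_smul]
    push_cast; simp
  calc r * n = (cayley S).dist 0 x := by
        rw [← cayley_dist_eq_dist_zero_sub, SimpleGraph.dist_comm, hγgeo]; omega
    _ ≤ (cayley S).dist 0 (r • g) + (cayley S).dist 0 (x - r • g) := by
        simpa using cayley_dist_zero_add_le hgen (r • g) (x - r • g)
    _ ≤ r * (cayley S).dist 0 g + D :=
        add_le_add (cayley_dist_zero_nsmul_le hgen g r) (hD ⟨_, hx, rfl⟩)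

end QuasiAlgebraic

theorem parallel_lines_geodesic_general {G : Type*} [AddCommGroup G] [AddGroup.FG G]
    (S : Set G)
    (hgen : AddSubgroup.closure S = ⊤) (s : G)
    (γ : ℤ → G)
    (hγ : IsQuasiAlgebraicLine S (QuotientAddGroup.mk' (AddCommGroup.torsion G) s) γ)
    (hγgeo : IsGeodesicLine (cayley S) γ)
    (η : ℤ → G)
    (hη : IsQuasiAlgebraicLine S (QuotientAddGroup.mk' (AddCommGroup.torsion G) s) η) :
    IsGeodesicLine (cayley S) η := by
  have hforward (k : ℤ) (m : ℕ) : (cayley S).dist (η k) (η (k + m)) = m := by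
    refine le_antisymm (SimpleGraph.dist_le_of_forall_adj_succ hη.1 k m) ?_
    rw [cayley_dist_eq_dist_zero_sub]
    exact hγgeo.le_cayley_dist_zero hgen hγ (by rw [hη.mk_sub]; simp)
  intro j k
  rcases le_total k j with h | h
  · obtain ⟨m, rfl⟩ : ∃ m : ℕ, j = k + m := ⟨(j - k).toNat, by omega⟩
    rw [SimpleGraph.dist_comm, hforward]; omega
  · obtain ⟨m, rfl⟩ : ∃ m : ℕ, k = j + m := ⟨(k - j).toNat, by omega⟩
    rw [hforward]; omega

/-- **Parallel lines stay geodesics.** If one quasi-algebraic line in `Cay(G,S)` of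
quasi-type `π_G s` is a geodesic line, then every quasi-algebraic line of quasi-type
`π_G s` is a geodesic line. -/
theorem parallel_lines_geodesic {G : Type*} [AddCommGroup G] [AddGroup.FG G]
    (S : Set G) (hfin : S.Finite) (hsym : ∀ t ∈ S, -t ∈ S)
    (hgen : AddSubgroup.closure S = ⊤) (s : G) (hs : s ∈ S)
    (γ : ℤ → G)
    (hγ : IsQuasiAlgebraicLine S (QuotientAddGroup.mk' (AddCommGroup.torsion G) s) γ)
    (hγgeo : IsGeodesicLine (cayley S) γ)
    (η : ℤ → G)
    (hη : IsQuasiAlgebraicLine S (QuotientAddGroup.mk' (AddCommGroup.torsion G) s) η) :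
    IsGeodesicLine (cayley S) η :=
  parallel_lines_geodesic_general S hgen s γ hγ hγgeo η hη
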